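/- arXiv:2409.19644 — 6 statements merged into one kernel-verified Lean document; each statement's English description precedes it below -/
import Mathlib

section
/- Let (λ_n)_{n≥0} and (μ_n)_{n≥0} be real sequences with λ_n>0 for all n≥0, μ_n>0 for all n≥1 and μ_0≥0. Define monic polynomials p_n by p_0(z)=1, p_1(z)=z−λ_0−μ_0 and z·p_n(z) = p_{n+1}(z) + (λ_n+μ_n)p_n(z) + λ_{n−1}μ_n p_{n−1}(z) for n≥1. Then for every n≥0, p_n(0) = (−1)^n λ_0⋯λ_{n−1} ( 1 + Σ_{k=0}^{n−1} (μ_0 μ_1⋯μ_k)/(λ_0 λ_1⋯λ_k) ). -/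
open Finset

/-- Lemma 3.1 (Birth–Death value of monic polynomials at zero):
for the monic orthogonal polynomial sequence of a Birth–Death Jacobi matrix with
parameters `(λ_n)`, `(μ_n)`, one has
`p_n(0) = (−1)^n λ_0⋯λ_{n−1} (1 + Σ_{k=0}^{n−1} (μ_0⋯μ_k)/(λ_0⋯λ_k))`. -/
theorem birth_death_monic_value_at_zero
    (lam mu : ℕ → ℝ)
    (hlam : ∀ n, 0 < lam n)
    (hmu : ∀ n, 1 ≤ n → 0 < mu n)
    (hmu0 : 0 ≤ mu 0)
    (p : ℕ → ℝ → ℝ)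
    (hp0 : ∀ z, p 0 z = 1)
    (hp1 : ∀ z, p 1 z = z - lam 0 - mu 0)
    (hrec : ∀ n, 1 ≤ n → ∀ z,
      z * p n z = p (n + 1) z + (lam n + mu n) * p n z + lam (n - 1) * mu n * p (n - 1) z) :
    ∀ n, p n 0 = (-1) ^ n * (∏ i ∈ Finset.range n, lam i) *
      (1 + ∑ k ∈ Finset.range n,
        (∏ i ∈ Finset.range (k + 1), mu i) / (∏ i ∈ Finset.range (k + 1), lam i)) := by
  have hL : ∀ m, (∏ i ∈ Finset.range m, lam i) ≠ 0 :=
    fun m => (Finset.prod_pos fun i _ => hlam i).ne'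
  have key : ∀ n, p n 0 = (-1) ^ n * (∏ i ∈ Finset.range n, lam i) *
      (1 + ∑ k ∈ Finset.range n,
        (∏ i ∈ Finset.range (k + 1), mu i) / (∏ i ∈ Finset.range (k + 1), lam i)) ∧
      p (n + 1) 0 = (-1) ^ (n + 1) * (∏ i ∈ Finset.range (n + 1), lam i) *
      (1 + ∑ k ∈ Finset.range (n + 1),
        (∏ i ∈ Finset.range (k + 1), mu i) / (∏ i ∈ Finset.range (k + 1), lam i)) := by
    intro n
    induction n with
    | zero =>
      constructor
      · simp [hp0]
      · rw [hp1]
        simp only [zero_add, Finset.sum_range_one, Finset.prod_range_one, pow_one]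
        field_simp [(hlam 0).ne']
        ring
    | succ n ih =>
      refine ⟨ih.2, ?_⟩
      have h := hrec (n + 1) (by omega) 0
      simp only [Nat.add_sub_cancel, zero_mul] at h
      have hp2 : p (n + 2) 0 = -((lam (n + 1) + mu (n + 1)) * p (n + 1) 0)
          - lam n * mu (n + 1) * p n 0 := by linarith
      rw [hp2, ih.1, ih.2]
      simp only [Finset.sum_range_succ, Finset.prod_range_succ]
      field_simp [hL, (hlam n).ne', (hlam (n+1)).ne']
      ring
  intro n
  exact (key n).1
end

section
/- Assume Σ_{j=0}^∞ 1/(λ_j π_j) < ∞ and set 𝔰_∞ = μ_0 Σ_{k=0}^∞ 1/(λ_k π_k). Then for every n≥0 the series Σ_{j=n}^∞ 1/(a_j P_j(0) P_{j+1}(0)) converges and −( Σ_{j=n}^∞ 1/(a_j P_j(0) P_{j+1}(0)) ) · P_n(0) = (−1)^n (√π_n/(1+𝔰_∞)) Σ_{j=n}^∞ 1/(λ_j π_j). -/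
open Finset Filter Topology

/-!
Since `π_{j+1} = π_j λ_j / μ_{j+1}`, one has `a_j √π_j √π_{j+1} = λ_j π_j`, so
`1 / (a_j P_j(0) P_{j+1}(0)) = -g_j / (S_j S_{j+1})` with `g_j = 1/(λ_j π_j)` and `S_j = 1 + 𝔰_j`.
As `S_{j+1} = S_j + μ_0 g_j`, these terms telescope (to `(1/S_j - 1/S_{j+1})/μ_0` when `μ_0 ≠ 0`):
`Σ_{n ≤ j < n+N} g_j / (S_j S_{j+1}) = (Σ_{n ≤ j < n+N} g_j) / (S_n S_{n+N})`, an identity that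
also holds for `μ_0 = 0`. Letting `N → ∞` gives `T / (S_n (1 + 𝔰_∞))` with `T = Σ_{j ≥ n} g_j`.
-/

section Telescoping

variable {g S : ℕ → ℝ} {c : ℝ}

theorem sub_eq_mul_sum_range_of_succ (hS : ∀ k, S (k + 1) = S k + c * g k) (N : ℕ) :
    S N - S 0 = c * ∑ j ∈ range N, g j := by
  rw [← sum_range_sub, mul_sum]
  exact sum_congr rfl fun k _ => by rw [hS]; ring

theorem sum_range_div_mul_succ (hS : ∀ k, S (k + 1) = S k + c * g k) (hS0 : ∀ k, S k ≠ 0)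
    (N : ℕ) :
    ∑ j ∈ range N, g j / (S j * S (j + 1)) = (∑ j ∈ range N, g j) / (S 0 * S N) := by
  induction N with
  | zero => simp
  | succ N ih =>
    have hN := sub_eq_mul_sum_range_of_succ hS N
    rw [sum_range_succ, ih, sum_range_succ, div_add_div _ _ (mul_ne_zero (hS0 0) (hS0 N))
      (mul_ne_zero (hS0 N) (hS0 (N + 1))), div_eq_div_iff (by simp [hS0]) (by simp [hS0]), hS N]
    linear_combination (-(S 0 * S N * (S N + c * g N) * g N)) * hN

theorem hasSum_div_mul_succ {G : ℝ} (hg : ∀ k, 0 ≤ g k) (hc : 0 ≤ c) (hS0 : 0 < S 0)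
    (hS : ∀ k, S (k + 1) = S k + c * g k) (hG : HasSum g G) :
    HasSum (fun j => g j / (S j * S (j + 1))) (G / (S 0 * (S 0 + c * G))) := by
  have hS_eq (N : ℕ) : S N = S 0 + c * ∑ j ∈ range N, g j := by
    linarith [sub_eq_mul_sum_range_of_succ hS N]
  have hS_pos (N : ℕ) : 0 < S N := by
    rw [hS_eq]; exact add_pos_of_pos_of_nonneg hS0 (mul_nonneg hc (sum_nonneg fun k _ => hg k))
  have hG_nonneg : 0 ≤ G := hG.nonneg hg
  rw [hasSum_iff_tendsto_nat_of_nonneg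
    (fun j => div_nonneg (hg j) (mul_pos (hS_pos j) (hS_pos (j + 1))).le)]
  have hpos : S 0 * (S 0 + c * G) ≠ 0 := by positivity
  refine (hG.tendsto_sum_nat.div
    (tendsto_const_nhds.mul (tendsto_const_nhds.add (hG.tendsto_sum_nat.const_mul c))) hpos).congr
    fun N => ?_
  rw [sum_range_div_mul_succ hS (fun k => (hS_pos k).ne'), Pi.div_apply, ← hS_eq]

end Telescoping

theorem sqrt_mul_mul_sqrt_mul_sqrt {l m p : ℝ} (hl : 0 < l) (hm : 0 < m) (hp : 0 ≤ p) :
    √(l * m) * (√p * √(p * (l / m))) = l * p := by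
  rw [← Real.sqrt_mul hp, ← Real.sqrt_mul (mul_pos hl hm).le,
    show l * m * (p * (p * (l / m))) = (l * p) * (l * p) by field_simp,
    Real.sqrt_mul_self (mul_nonneg hl.le hp)]

theorem one_div_sqrt_mul_mul_neg_one_pow_mul_eq (j : ℕ) {l m p x y : ℝ} (hl : 0 < l) (hm : 0 < m)
    (hp : 0 ≤ p) :
    1 / (√(l * m) * ((-1) ^ j * √p * x) * ((-1) ^ (j + 1) * √(p * (l / m)) * y))
      = -(1 / (l * p) / (x * y)) := by
  have hsign : (-1 : ℝ) ^ j * (-1) ^ (j + 1) = -1 := by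
    rw [← pow_add]; exact Odd.neg_one_pow ⟨j, by ring⟩
  rw [show √(l * m) * ((-1) ^ j * √p * x) * ((-1) ^ (j + 1) * √(p * (l / m)) * y)
      = ((-1) ^ j * (-1) ^ (j + 1)) * (√(l * m) * (√p * √(p * (l / m)))) * (x * y) by ring,
    hsign, sqrt_mul_mul_sqrt_mul_sqrt hl hm hp, div_div]
  ring

/-- Lemma 3.2, convergent case: assuming `Σ_j 1/(λ_j π_j) < ∞`, with
`𝔰_∞ = μ_0 Σ_{k=0}^∞ 1/(λ_k π_k)`, for every `n ≥ 0` the tail series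
`Σ_{j=n}^∞ 1/(a_j P_j(0) P_{j+1}(0))` converges and
`−(Σ_{j=n}^∞ 1/(a_j P_j(0) P_{j+1}(0))) · P_n(0)
   = (−1)^n (√π_n/(1+𝔰_∞)) Σ_{j=n}^∞ 1/(λ_j π_j)`. -/
theorem birth_death_tail_series_summable_case
    (lam mu : ℕ → ℝ)
    (hlam : ∀ n, 0 < lam n)
    (hmu : ∀ n, 1 ≤ n → 0 < mu n)
    (hmu0 : 0 ≤ mu 0)
    (pi a s P : ℕ → ℝ)
    (hpi : ∀ n, pi n = ∏ k ∈ Finset.range n, lam k / mu (k + 1))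
    (ha : ∀ n, a n = Real.sqrt (lam n * mu (n + 1)))
    (hs : ∀ n, s n = mu 0 * ∑ k ∈ Finset.range n, 1 / (lam k * pi k))
    (hP : ∀ n, P n = (-1) ^ n * Real.sqrt (pi n) * (1 + s n))
    (hsum : Summable (fun j : ℕ => 1 / (lam j * pi j)))
    (sInf : ℝ)
    (hsInf : sInf = mu 0 * ∑' j : ℕ, 1 / (lam j * pi j)) :
    ∀ n : ℕ,
      Summable (fun j : ℕ => 1 / (a (n + j) * P (n + j) * P (n + j + 1))) ∧
      -(∑' j : ℕ, 1 / (a (n + j) * P (n + j) * P (n + j + 1))) * P n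
        = (-1) ^ n * (Real.sqrt (pi n) / (1 + sInf)) *
            ∑' j : ℕ, 1 / (lam (n + j) * pi (n + j)) := by
  intro n
  have hpi_pos (k : ℕ) : 0 < pi k := by
    rw [hpi]; exact prod_pos fun i _ => div_pos (hlam i) (hmu _ i.succ_pos)
  have hg_nonneg (k : ℕ) : 0 ≤ 1 / (lam k * pi k) := (one_div_pos.2 (mul_pos (hlam k) (hpi_pos k))).le
  have hs_nonneg : 0 ≤ s n := by
    rw [hs]; exact mul_nonneg hmu0 (sum_nonneg fun k _ => hg_nonneg k)
  have hterm (j : ℕ) : 1 / (a j * P j * P (j + 1))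
      = -(1 / (lam j * pi j) / ((1 + s j) * (1 + s (j + 1)))) := by
    rw [ha, hP, hP, hpi (j + 1), prod_range_succ, ← hpi]
    exact one_div_sqrt_mul_mul_neg_one_pow_mul_eq j (hlam j) (hmu _ j.succ_pos) (hpi_pos j).le
  have hstep (k : ℕ) :
      1 + s (n + k + 1) = 1 + s (n + k) + mu 0 * (1 / (lam (n + k) * pi (n + k))) := by
    rw [hs, hs, sum_range_succ]; ring
  have htail : 1 + sInf = 1 + s n + mu 0 * ∑' j, 1 / (lam (n + j) * pi (n + j)) := by
    rw [hsInf, hs, ← hsum.sum_add_tsum_nat_add n]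
    simp only [add_comm _ n]
    ring
  have hsum_tail := hasSum_div_mul_succ (S := fun k => 1 + s (n + k)) (fun k => hg_nonneg (n + k))
    hmu0 (by rw [add_zero]; linarith) hstep (hsum.comp_injective (add_right_injective n)).hasSum
  simp only [add_zero, Function.comp_def, ← add_assoc, ← htail] at hsum_tail
  replace hsum_tail := hsum_tail.neg
  simp only [← hterm] at hsum_tail
  refine ⟨hsum_tail.summable, ?_⟩
  rw [hsum_tail.tsum_eq, hP n, neg_neg]
  field_simp
end

section
/- Assume μ_0 > 0 and Σ_{j=0}^∞ 1/(λ_j π_j) = ∞. Then for every n≥0 the series Σ_{j=n}^∞ 1/(a_j P_j(0) P_{j+1}(0)) converges and −( Σ_{j=n}^∞ 1/(a_j P_j(0) P_{j+1}(0)) ) · P_n(0) = (−1)^n √π_n / μ_0. -/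
/-!
Since `a_m P_m(0) P_{m+1}(0) = -λ_m π_m (1 + 𝔰_m)(1 + 𝔰_{m+1})` and
`𝔰_{m+1} - 𝔰_m = μ_0 / (λ_m π_m)`, the terms of the series are the differences
`1/(μ_0 (1 + 𝔰_{m+1})) - 1/(μ_0 (1 + 𝔰_m))`. The series therefore telescopes, and it converges
to `-1/(μ_0 (1 + 𝔰_n))` because `𝔰_m → ∞`; multiplying by `P_n(0)` cancels the factor `1 + 𝔰_n`.
-/

open Finset Filter Topology

theorem hasSum_sub_succ_of_antitone {g : ℕ → ℝ} (hg : Antitone g) {l : ℝ}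
    (hl : Tendsto g atTop (𝓝 l)) : HasSum (fun n => g n - g (n + 1)) (g 0 - l) := by
  refine (hasSum_iff_tendsto_nat_of_nonneg (fun n => sub_nonneg.2 (hg n.le_succ)) _).2 ?_
  simp_rw [Finset.sum_range_sub']
  exact tendsto_const_nhds.sub hl

theorem hasSum_one_div_sub_one_div_succ {u : ℕ → ℝ} (hu : Monotone u) (hu0 : 0 < u 0)
    (hl : Tendsto u atTop atTop) : HasSum (fun n => 1 / u n - 1 / u (n + 1)) (1 / u 0) := by
  have hanti : Antitone fun n => 1 / u n := fun m n hmn =>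
    one_div_le_one_div_of_le (hu0.trans_le (hu (Nat.zero_le m))) (hu hmn)
  have hzero : Tendsto (fun n => 1 / u n) atTop (𝓝 0) := by
    simp only [one_div]
    exact hl.inv_tendsto_atTop
  simpa only [sub_zero] using hasSum_sub_succ_of_antitone hanti hzero

namespace BirthDeath

variable {lam mu pi a s P : ℕ → ℝ}

theorem pi_pos (hlam : ∀ n, 0 < lam n) (hmu : ∀ n, 1 ≤ n → 0 < mu n)
    (hpi : ∀ n, pi n = ∏ k ∈ Finset.range n, lam k / mu (k + 1)) (n : ℕ) : 0 < pi n := by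
  rw [hpi]
  exact Finset.prod_pos fun k _ => div_pos (hlam k) (hmu (k + 1) k.succ_pos)

theorem s_succ (hs : ∀ n, s n = mu 0 * ∑ k ∈ Finset.range n, 1 / (lam k * pi k)) (m : ℕ) :
    s (m + 1) = s m + mu 0 / (lam m * pi m) := by
  rw [hs, hs, Finset.sum_range_succ, mul_add, mul_one_div]

theorem s_monotone (hlam : ∀ n, 0 < lam n) (hmu0 : 0 < mu 0) (hpi_pos : ∀ n, 0 < pi n)
    (hs : ∀ n, s n = mu 0 * ∑ k ∈ Finset.range n, 1 / (lam k * pi k)) : Monotone s :=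
  monotone_nat_of_le_succ fun m => by
    rw [s_succ hs m]
    exact le_add_of_nonneg_right (div_pos hmu0 (mul_pos (hlam m) (hpi_pos m))).le

theorem s_nonneg (hlam : ∀ n, 0 < lam n) (hmu0 : 0 < mu 0) (hpi_pos : ∀ n, 0 < pi n)
    (hs : ∀ n, s n = mu 0 * ∑ k ∈ Finset.range n, 1 / (lam k * pi k)) (m : ℕ) : 0 ≤ s m := by
  rw [hs]
  exact mul_nonneg hmu0.le
    (Finset.sum_nonneg fun k _ => (one_div_pos.2 (mul_pos (hlam k) (hpi_pos k))).le)

theorem a_mul_sqrt_pi_mul_sqrt_pi_succ (hlam : ∀ n, 0 < lam n) (hmu : ∀ n, 1 ≤ n → 0 < mu n)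
    (hpi : ∀ n, pi n = ∏ k ∈ Finset.range n, lam k / mu (k + 1))
    (ha : ∀ n, a n = Real.sqrt (lam n * mu (n + 1))) (m : ℕ) :
    a m * Real.sqrt (pi m) * Real.sqrt (pi (m + 1)) = lam m * pi m := by
  have hmu_succ : 0 < mu (m + 1) := hmu (m + 1) m.succ_pos
  have hpi_succ : pi (m + 1) = pi m * (lam m / mu (m + 1)) := by
    rw [hpi, hpi, Finset.prod_range_succ]
  have hsq : lam m * mu (m + 1) * pi m * pi (m + 1) = (lam m * pi m) ^ 2 := by
    rw [hpi_succ]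
    field_simp
  rw [ha, ← Real.sqrt_mul (mul_pos (hlam m) hmu_succ).le,
    ← Real.sqrt_mul (mul_nonneg (mul_pos (hlam m) hmu_succ).le (pi_pos hlam hmu hpi m).le), hsq,
    Real.sqrt_sq (mul_pos (hlam m) (pi_pos hlam hmu hpi m)).le]

theorem a_mul_P_mul_P_succ (hlam : ∀ n, 0 < lam n) (hmu : ∀ n, 1 ≤ n → 0 < mu n)
    (hpi : ∀ n, pi n = ∏ k ∈ Finset.range n, lam k / mu (k + 1))
    (ha : ∀ n, a n = Real.sqrt (lam n * mu (n + 1)))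
    (hP : ∀ n, P n = (-1) ^ n * Real.sqrt (pi n) * (1 + s n)) (m : ℕ) :
    a m * P m * P (m + 1) = -(lam m * pi m * ((1 + s m) * (1 + s (m + 1)))) := by
  have hsign : (-1 : ℝ) ^ m * (-1) ^ m = 1 := by rw [← mul_pow]; norm_num
  rw [hP, hP, ← a_mul_sqrt_pi_mul_sqrt_pi_succ hlam hmu hpi ha m, pow_succ]
  linear_combination
    -(a m * Real.sqrt (pi m) * Real.sqrt (pi (m + 1)) * (1 + s m) * (1 + s (m + 1))) * hsign

theorem one_div_a_mul_P_mul_P_succ (hlam : ∀ n, 0 < lam n) (hmu : ∀ n, 1 ≤ n → 0 < mu n)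
    (hmu0 : 0 < mu 0) (hpi : ∀ n, pi n = ∏ k ∈ Finset.range n, lam k / mu (k + 1))
    (ha : ∀ n, a n = Real.sqrt (lam n * mu (n + 1)))
    (hs : ∀ n, s n = mu 0 * ∑ k ∈ Finset.range n, 1 / (lam k * pi k))
    (hP : ∀ n, P n = (-1) ^ n * Real.sqrt (pi n) * (1 + s n)) (m : ℕ) :
    1 / (a m * P m * P (m + 1)) = -(1 / (mu 0 * (1 + s m)) - 1 / (mu 0 * (1 + s (m + 1)))) := by
  have hpi_pos := pi_pos hlam hmu hpi
  have hc : 0 < lam m * pi m := mul_pos (hlam m) (hpi_pos m)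
  have hx : 0 < 1 + s m := by linarith [s_nonneg hlam hmu0 hpi_pos hs m]
  have hy : 0 < 1 + s (m + 1) := by linarith [s_nonneg hlam hmu0 hpi_pos hs (m + 1)]
  rw [s_succ hs m] at hy
  rw [a_mul_P_mul_P_succ hlam hmu hpi ha hP m, s_succ hs m]
  field_simp
  ring

end BirthDeath

/-- Lemma 3.2, divergent case: assuming `μ_0 > 0` and `Σ_j 1/(λ_j π_j) = ∞`,
for every `n ≥ 0` the tail series `Σ_{j=n}^∞ 1/(a_j P_j(0) P_{j+1}(0))` converges and
`−(Σ_{j=n}^∞ 1/(a_j P_j(0) P_{j+1}(0))) · P_n(0) = (−1)^n √π_n / μ_0`. -/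
theorem birth_death_tail_series_divergent_case
    (lam mu : ℕ → ℝ)
    (hlam : ∀ n, 0 < lam n)
    (hmu : ∀ n, 1 ≤ n → 0 < mu n)
    (hmu0 : 0 < mu 0)
    (pi a s P : ℕ → ℝ)
    (hpi : ∀ n, pi n = ∏ k ∈ Finset.range n, lam k / mu (k + 1))
    (ha : ∀ n, a n = Real.sqrt (lam n * mu (n + 1)))
    (hs : ∀ n, s n = mu 0 * ∑ k ∈ Finset.range n, 1 / (lam k * pi k))
    (hP : ∀ n, P n = (-1) ^ n * Real.sqrt (pi n) * (1 + s n))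
    (hdiv : Tendsto (fun n : ℕ => ∑ k ∈ Finset.range n, 1 / (lam k * pi k)) atTop atTop) :
    ∀ n : ℕ,
      Summable (fun j : ℕ => 1 / (a (n + j) * P (n + j) * P (n + j + 1))) ∧
      -(∑' j : ℕ, 1 / (a (n + j) * P (n + j) * P (n + j + 1))) * P n
        = (-1) ^ n * Real.sqrt (pi n) / mu 0 := by
  have hpi_pos := BirthDeath.pi_pos hlam hmu hpi
  have hs_mono := BirthDeath.s_monotone hlam hmu0 hpi_pos hs
  have hs_tendsto : Tendsto s atTop atTop := by
    simpa only [← hs] using hdiv.const_mul_atTop hmu0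
  have hs_nonneg := BirthDeath.s_nonneg hlam hmu0 hpi_pos hs
  have hu_mono : Monotone fun m => mu 0 * (1 + s m) := fun i j hij =>
    mul_le_mul_of_nonneg_left (by linarith [hs_mono hij]) hmu0.le
  have hu_tendsto : Tendsto (fun m => mu 0 * (1 + s m)) atTop atTop :=
    (tendsto_atTop_add_const_left _ 1 hs_tendsto).const_mul_atTop hmu0
  intro n
  have htail : HasSum (fun j => 1 / (mu 0 * (1 + s (n + j))) - 1 / (mu 0 * (1 + s (n + j + 1))))
      (1 / (mu 0 * (1 + s n))) :=
    hasSum_one_div_sub_one_div_succ (fun i j hij => hu_mono (by omega))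
      (mul_pos hmu0 (by linarith [hs_nonneg (n + 0)]))
      (hu_tendsto.comp ((tendsto_add_atTop_nat n).congr fun j => add_comm j n))
  have hsum : HasSum (fun j => 1 / (a (n + j) * P (n + j) * P (n + j + 1)))
      (-(1 / (mu 0 * (1 + s n)))) := by
    simpa only [BirthDeath.one_div_a_mul_P_mul_P_succ hlam hmu hmu0 hpi ha hs hP] using htail.neg
  refine ⟨hsum.summable, ?_⟩
  have hx : 0 < 1 + s n := by linarith [hs_nonneg n]
  rw [hsum.tsum_eq, neg_neg, hP n]
  field_simp
end

section
/- Fix an integer k≥1. Let (ζ_j)_{j≥1} be a strictly increasing sequence of positive real numbers with Σ_{j=1}^∞ ζ_j^{−k} < ∞, and for each n≥1 let x_{1;n} < ⋯ < x_{n;n} be real numbers with ζ_j < x_{j;n} for 1≤j≤n and lim_{n→∞} x_{j;n} = ζ_j for each fixed j. Then the infinite product z ↦ ∏_{j=1}^∞ E_{k−1}(z/ζ_j) defines an entire function and the finite products z ↦ ∏_{j=1}^n E_{k−1}(z/x_{j;n}) converge to it locally uniformly on ℂ as n→∞. -/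
/-!
For `‖w‖ ≤ 1/2` one has `E_m(w) = exp L_m(w)` with `‖L_m(w)‖ ≤ 2‖w‖^(m+1)`, where `L_m` is the
tail of the Taylor series of `log (1 - w)`. Fix `z₀` and `N` with `ζ_j ≥ 2(‖z₀‖ + 1)` for `j ≥ N`.
Near `z₀` the product `∏_{j<n} E_m(z/x_{j;n})` is the finite product of its first `N` factors,
which converge jointly in `(n, z)` by continuity, times the exponential of a sum of `L_m`'s
dominated by the summable sequence `2((‖z₀‖ + 1)/ζ_j)^(m+1)`, to which Tannery's theorem applies.
Hence the finite products converge to the infinite product *continuously*: along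
`(n, z) → (∞, z₀)`. Continuous convergence to a function is locally uniform convergence to it,
and the limit is entire by Weierstrass' theorem.
-/

open Finset Filter

/-- The `m`-th elementary factor `E_m(w) = (1−w)·exp(Σ_{j=1}^m w^j/j)`. -/
noncomputable def elemFactor (m : ℕ) (w : ℂ) : ℂ :=
  (1 - w) * Complex.exp (∑ j ∈ Finset.range m, w ^ (j + 1) / ((j : ℂ) + 1))

open Topology Complex

section ContinuousConvergence

variable {ι α β : Type*} [TopologicalSpace α] {l : Filter ι} {F : ι → α → β} {f : α → β}

lemma continuous_of_tendsto_prod_nhds [TopologicalSpace β] [RegularSpace β] [l.NeBot]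
    (h : ∀ x, Tendsto (fun p : ι × α => F p.1 p.2) (l ×ˢ 𝓝 x) (𝓝 (f x))) : Continuous f := by
  refine continuous_iff_continuousAt.2 fun x => (closed_nhds_basis (f x)).tendsto_right_iff.2 ?_
  rintro V ⟨hV, hVclosed⟩
  obtain ⟨P, hP, Q, hQ, hPQ⟩ := eventually_prod_iff.1 (h x hV)
  filter_upwards [hQ] with z hz
  exact hVclosed.mem_of_tendsto ((h z).comp (tendsto_id.prodMk tendsto_const_nhds))
    (hP.mono fun n hn => hPQ hn hz)

lemma tendstoLocallyUniformly_of_tendsto_prod_nhds [UniformSpace β] [l.NeBot]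
    (h : ∀ x, Tendsto (fun p : ι × α => F p.1 p.2) (l ×ˢ 𝓝 x) (𝓝 (f x))) :
    TendstoLocallyUniformly F f l := by
  have hf := continuous_of_tendsto_prod_nhds h
  refine tendstoLocallyUniformly_iff_forall_tendsto.2 fun x => ?_
  exact ((hf.continuousAt.tendsto.comp tendsto_snd).prodMk_nhds (h x)).mono_right
    (nhds_le_uniformity (f x))

end ContinuousConvergence

noncomputable def logElemFactor (m : ℕ) (w : ℂ) : ℂ :=
  log (1 - w) + ∑ j ∈ range m, w ^ (j + 1) / ((j : ℂ) + 1)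

lemma exp_logElemFactor (m : ℕ) {w : ℂ} (hw : w ≠ 1) :
    exp (logElemFactor m w) = elemFactor m w := by
  rw [logElemFactor, exp_add, exp_log (sub_ne_zero.2 hw.symm), elemFactor]

lemma logTaylor_succ_neg (m : ℕ) (w : ℂ) :
    logTaylor (m + 1) (-w) = -∑ j ∈ range m, w ^ (j + 1) / ((j : ℂ) + 1) := by
  rw [logTaylor, sum_range_succ', ← sum_neg_distrib]
  simp only [Nat.cast_zero, div_zero, add_zero, Nat.cast_add, Nat.cast_one]
  refine sum_congr rfl fun j _ => ?_
  rw [neg_pow w, ← mul_assoc, ← pow_add, show j + 1 + 1 + (j + 1) = 2 * (j + 1) + 1 by ring,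
    pow_succ, pow_mul, neg_one_sq, one_pow]
  ring

lemma logElemFactor_eq_log_sub_logTaylor (m : ℕ) (w : ℂ) :
    logElemFactor m w = log (1 + -w) - logTaylor (m + 1) (-w) := by
  rw [logTaylor_succ_neg, logElemFactor, ← sub_eq_add_neg, sub_neg_eq_add]

lemma norm_logElemFactor_le (m : ℕ) {w : ℂ} (hw : ‖w‖ ≤ 1 / 2) :
    ‖logElemFactor m w‖ ≤ 2 * ‖w‖ ^ (m + 1) := by
  have hw1 : ‖-w‖ < 1 := by rw [norm_neg]; linarith
  rw [logElemFactor_eq_log_sub_logTaylor]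
  refine (norm_log_sub_logTaylor_le m hw1).trans ?_
  rw [norm_neg, mul_div_assoc, mul_comm]
  gcongr
  have : (1 - ‖w‖)⁻¹ ≤ 2 := by
    rw [inv_le_comm₀ (by linarith) two_pos]
    linarith
  rw [div_le_iff₀ (by positivity)]
  nlinarith [(by positivity : (0 : ℝ) ≤ m)]

lemma continuousAt_logElemFactor (m : ℕ) {w : ℂ} (hw : ‖w‖ < 1) :
    ContinuousAt (logElemFactor m) w := by
  have : 1 - w ∈ slitPlane := by
    simpa [sub_eq_add_neg] using mem_slitPlane_of_norm_lt_one (z := -w) (by simpa using hw)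
  unfold logElemFactor
  fun_prop (disch := exact this)

lemma differentiable_elemFactor (m : ℕ) : Differentiable ℂ (elemFactor m) := by
  unfold elemFactor
  fun_prop

lemma norm_elemFactor_sub_one_le (m : ℕ) {w : ℂ} (hw : ‖w‖ ≤ 1 / 2) :
    ‖elemFactor m w - 1‖ ≤ 4 * ‖w‖ ^ (m + 1) := by
  have hw1 : w ≠ 1 := by rintro rfl; norm_num at hw
  have hL := norm_logElemFactor_le m hw
  have hsmall : 2 * ‖w‖ ^ (m + 1) ≤ 1 := by
    have := (pow_le_of_le_one (norm_nonneg w) (by linarith) (by omega : m + 1 ≠ 0)).trans hw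
    linarith
  rw [← exp_logElemFactor m hw1]
  calc ‖exp (logElemFactor m w) - 1‖ ≤ 2 * ‖logElemFactor m w‖ :=
        norm_exp_sub_one_le (hL.trans hsmall)
    _ ≤ 4 * ‖w‖ ^ (m + 1) := by linarith

lemma norm_div_ofReal_le_half {z : ℂ} {a : ℝ} (h : 2 * ‖z‖ ≤ a) : ‖z / a‖ ≤ 1 / 2 := by
  have ha : 0 ≤ a := (by positivity : (0 : ℝ) ≤ 2 * ‖z‖).trans h
  rw [norm_div, norm_real, Real.norm_of_nonneg ha]
  exact div_le_of_le_mul₀ ha (by norm_num) (by linarith)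

lemma norm_logElemFactor_div_le (m : ℕ) {z : ℂ} {R a b : ℝ} (hz : ‖z‖ ≤ R) (hb : 0 < b)
    (hRb : 2 * R ≤ b) (hba : b ≤ a) :
    ‖logElemFactor m (z / a)‖ ≤ 2 * (R / b) ^ (m + 1) := by
  have hza : ‖z / a‖ ≤ R / b := by
    rw [norm_div, norm_real, Real.norm_of_nonneg (hb.trans_le hba).le]
    exact div_le_div₀ ((norm_nonneg z).trans hz) hz hb hba
  have hRb' : R / b ≤ 1 / 2 := by
    rw [div_le_iff₀ hb]
    linarith
  calc ‖logElemFactor m (z / a)‖ ≤ 2 * ‖z / a‖ ^ (m + 1) :=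
        norm_logElemFactor_le m (hza.trans hRb')
    _ ≤ 2 * (R / b) ^ (m + 1) := by gcongr

lemma prod_range_elemFactor_eq_mul_exp (m : ℕ) {a : ℕ → ℝ} {z : ℂ} {N n : ℕ} (hNn : N ≤ n)
    (ha : ∀ j ∈ Ico N n, 2 * ‖z‖ ≤ a j) :
    ∏ j ∈ range n, elemFactor m (z / a j) =
      (∏ j ∈ range N, elemFactor m (z / a j)) *
        exp (∑' j, if j ∈ Ico N n then logElemFactor m (z / a j) else 0) := by
  rw [← prod_range_mul_prod_Ico _ hNn, tsum_eq_sum (s := Ico N n) fun j hj => if_neg hj,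
    exp_sum]
  refine congrArg _ (prod_congr rfl fun j hj => ?_)
  have hw := norm_div_ofReal_le_half (ha j hj)
  rw [if_pos hj, exp_logElemFactor m fun h => by norm_num [h] at hw]

lemma tendsto_div_ofReal {ι : Type*} {l : Filter ι} {y : ι → ℝ} {c : ℝ} (hy : Tendsto y l (𝓝 c))
    (hc : c ≠ 0) (z₀ : ℂ) :
    Tendsto (fun p : ι × ℂ => p.2 / (y p.1 : ℂ)) (l ×ˢ 𝓝 z₀) (𝓝 (z₀ / c)) :=
  tendsto_snd.div ((continuous_ofReal.tendsto c).comp (hy.comp tendsto_fst)) (ofReal_ne_zero.2 hc)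

lemma eventually_norm_le_add_one {ι : Type*} (l : Filter ι) (z₀ : ℂ) :
    ∀ᶠ p : ι × ℂ in l ×ˢ 𝓝 z₀, ‖p.2‖ ≤ ‖z₀‖ + 1 :=
  ((continuous_norm.tendsto z₀).comp tendsto_snd).eventually_le_const (lt_add_one _)

lemma tendsto_atTop_of_summable_one_div_pow {k : ℕ} {ζ : ℕ → ℝ} (hζpos : ∀ j, 0 < ζ j)
    (hsum : Summable fun j => 1 / ζ j ^ k) : Tendsto ζ atTop atTop := by
  have hpow : Tendsto (fun j => ζ j ^ k) atTop atTop := by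
    have h : Tendsto (fun j => 1 / ζ j ^ k) atTop (𝓝[>] 0) :=
      tendsto_nhdsWithin_iff.2 ⟨hsum.tendsto_atTop_zero,
        Eventually.of_forall fun j => Set.mem_Ioi.2 (by have := hζpos j; positivity)⟩
    simpa [Pi.inv_def] using h.inv_tendsto_nhdsGT_zero
  refine tendsto_atTop.2 fun b => ?_
  filter_upwards [hpow.eventually_gt_atTop (max b 0 ^ k)] with j hj
  exact (le_max_left b 0).trans (lt_of_pow_lt_pow_left₀ k (hζpos j).le hj).le

section Products

variable {m : ℕ} {ζ : ℕ → ℝ} {y : ℕ → ℕ → ℝ} {z₀ : ℂ} {N : ℕ}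

lemma multipliable_elemFactor_div (hζpos : ∀ j, 0 < ζ j)
    (hsum : Summable fun j => 1 / ζ j ^ (m + 1)) (z : ℂ) :
    Multipliable fun j => elemFactor m (z / ζ j) := by
  have hnorm : Summable fun j => ‖elemFactor m (z / ζ j) - 1‖ := by
    refine .of_norm_bounded_eventually_nat (hsum.mul_left (4 * ‖z‖ ^ (m + 1))) ?_
    filter_upwards [(tendsto_atTop_of_summable_one_div_pow hζpos hsum).eventually_ge_atTop
      (2 * ‖z‖)] with j hj
    calc ‖‖elemFactor m (z / ζ j) - 1‖‖ ≤ 4 * ‖z / ζ j‖ ^ (m + 1) := by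
          rw [norm_norm]
          exact norm_elemFactor_sub_one_le m (norm_div_ofReal_le_half hj)
      _ = 4 * ‖z‖ ^ (m + 1) * (1 / ζ j ^ (m + 1)) := by
          rw [norm_div, norm_real, Real.norm_of_nonneg (hζpos j).le, div_pow]
          ring
  simpa using multipliable_one_add_of_summable hnorm

lemma tendsto_tsum_logElemFactor (hζpos : ∀ j, 0 < ζ j)
    (hsum : Summable fun j => 1 / ζ j ^ (m + 1)) (hN : ∀ j, N ≤ j → 2 * (‖z₀‖ + 1) ≤ ζ j)
    (hy : ∀ n j, j < n → ζ j ≤ y n j) (hylim : ∀ j, Tendsto (y · j) atTop (𝓝 (ζ j))) :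
    Tendsto (fun p : ℕ × ℂ => ∑' j, if j ∈ Ico N p.1 then logElemFactor m (p.2 / y p.1 j) else 0)
      (atTop ×ˢ 𝓝 z₀) (𝓝 (∑' j, if N ≤ j then logElemFactor m (z₀ / ζ j) else 0)) := by
  have hbound : Summable fun j => 2 * ((‖z₀‖ + 1) / ζ j) ^ (m + 1) :=
    (hsum.mul_left (2 * (‖z₀‖ + 1) ^ (m + 1))).congr fun j => by rw [div_pow]; ring
  refine tendsto_tsum_of_dominated_convergence hbound (fun j => ?_) ?_
  · by_cases hj : N ≤ j
    · have hlarge : ∀ᶠ p : ℕ × ℂ in atTop ×ˢ 𝓝 z₀, j < p.1 :=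
        tendsto_fst.eventually (eventually_gt_atTop j)
      have hz₀ : ‖z₀ / ζ j‖ < 1 :=
        (norm_div_ofReal_le_half (by linarith [hN j hj])).trans_lt (by norm_num)
      rw [if_pos hj]
      refine Tendsto.congr' (hlarge.mono fun p hp => (if_pos (mem_Ico.2 ⟨hj, hp⟩)).symm) ?_
      exact (continuousAt_logElemFactor m hz₀).tendsto.comp
        (tendsto_div_ofReal (hylim j) (hζpos j).ne' z₀)
    · simp only [hj, if_false, mem_Ico, false_and]
      exact tendsto_const_nhds
  · filter_upwards [eventually_norm_le_add_one atTop z₀] with p hp j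
    split_ifs with hj
    · obtain ⟨hNj, hjn⟩ := mem_Ico.1 hj
      exact norm_logElemFactor_div_le m hp (hζpos j) (hN j hNj) (hy _ _ hjn)
    · have := hζpos j
      rw [norm_zero]
      positivity

lemma tendsto_prod_range_elemFactor_div_of_ge (hζpos : ∀ j, 0 < ζ j)
    (hsum : Summable fun j => 1 / ζ j ^ (m + 1)) (hN : ∀ j, N ≤ j → 2 * (‖z₀‖ + 1) ≤ ζ j)
    (hy : ∀ n j, j < n → ζ j ≤ y n j) (hylim : ∀ j, Tendsto (y · j) atTop (𝓝 (ζ j))) :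
    Tendsto (fun p : ℕ × ℂ => ∏ j ∈ range p.1, elemFactor m (p.2 / y p.1 j)) (atTop ×ˢ 𝓝 z₀)
      (𝓝 ((∏ j ∈ range N, elemFactor m (z₀ / ζ j)) *
        exp (∑' j, if N ≤ j then logElemFactor m (z₀ / ζ j) else 0))) := by
  have hhead : Tendsto (fun p : ℕ × ℂ => ∏ j ∈ range N, elemFactor m (p.2 / y p.1 j))
      (atTop ×ˢ 𝓝 z₀) (𝓝 (∏ j ∈ range N, elemFactor m (z₀ / ζ j))) :=
    tendsto_finsetProd _ fun j _ =>
      (differentiable_elemFactor m).continuous.continuousAt.tendsto.comp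
        (tendsto_div_ofReal (hylim j) (hζpos j).ne' z₀)
  refine (hhead.mul (tendsto_tsum_logElemFactor hζpos hsum hN hy hylim).cexp).congr' ?_
  filter_upwards [tendsto_fst.eventually (eventually_ge_atTop N),
    eventually_norm_le_add_one atTop z₀] with p hNp hp
  refine (prod_range_elemFactor_eq_mul_exp m hNp fun j hj => ?_).symm
  obtain ⟨hNj, hjn⟩ := mem_Ico.1 hj
  linarith [hN j hNj, hy _ _ hjn]

lemma tendsto_prod_range_elemFactor_div (hζpos : ∀ j, 0 < ζ j)
    (hsum : Summable fun j => 1 / ζ j ^ (m + 1))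
    (hy : ∀ n j, j < n → ζ j ≤ y n j) (hylim : ∀ j, Tendsto (y · j) atTop (𝓝 (ζ j))) (z₀ : ℂ) :
    Tendsto (fun p : ℕ × ℂ => ∏ j ∈ range p.1, elemFactor m (p.2 / y p.1 j)) (atTop ×ˢ 𝓝 z₀)
      (𝓝 (∏' j, elemFactor m (z₀ / ζ j))) := by
  obtain ⟨N, hN⟩ := eventually_atTop.1 <|
    (tendsto_atTop_of_summable_one_div_pow hζpos hsum).eventually_ge_atTop (2 * (‖z₀‖ + 1))
  -- For `y n j = ζ j` and `z = z₀` these are the partial products of `∏' j, E_m(z₀/ζ_j)`,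
  -- which identifies the limit.
  have hpartial := (tendsto_prod_range_elemFactor_div_of_ge hζpos hsum hN (y := fun _ j => ζ j)
    (fun _ _ _ => le_rfl) fun _ => tendsto_const_nhds).comp
    (tendsto_id.prodMk (tendsto_const_nhds (x := z₀)))
  rw [tendsto_nhds_unique (multipliable_elemFactor_div hζpos hsum z₀).tendsto_prod_tprod_nat
    hpartial]
  exact tendsto_prod_range_elemFactor_div_of_ge hζpos hsum hN hy hylim

end Products

theorem regularized_characteristic_function_convergence_general
    (k : ℕ) (hk : 1 ≤ k)
    (ζ : ℕ → ℝ)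
    (hζpos : ∀ j, 0 < ζ j)
    (hζsum : Summable (fun j : ℕ => 1 / ζ j ^ k))
    (x : ℕ → ℕ → ℝ)
    (hxgt : ∀ n, ∀ j, j < n → ζ j < x n j)
    (hxlim : ∀ j, Tendsto (fun n => x n j) atTop (nhds (ζ j))) :
    (∀ z : ℂ, Multipliable (fun j : ℕ => elemFactor (k - 1) (z / (ζ j : ℂ)))) ∧
    Differentiable ℂ (fun z : ℂ => ∏' j : ℕ, elemFactor (k - 1) (z / (ζ j : ℂ))) ∧
    TendstoLocallyUniformly
      (fun (n : ℕ) (z : ℂ) => ∏ j ∈ Finset.range n, elemFactor (k - 1) (z / (x n j : ℂ)))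
      (fun z : ℂ => ∏' j : ℕ, elemFactor (k - 1) (z / (ζ j : ℂ)))
      atTop := by
  obtain ⟨m, rfl⟩ : ∃ m, k = m + 1 := ⟨k - 1, by omega⟩
  rw [Nat.add_sub_cancel]
  have hpartial : TendstoLocallyUniformly (fun n z => ∏ j ∈ range n, elemFactor m (z / ζ j))
      (fun z => ∏' j, elemFactor m (z / ζ j)) atTop :=
    tendstoLocallyUniformly_of_tendsto_prod_nhds <| tendsto_prod_range_elemFactor_div hζpos hζsum
      (y := fun _ j => ζ j) (fun _ _ _ => le_rfl) fun _ => tendsto_const_nhds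
  refine ⟨multipliable_elemFactor_div hζpos hζsum, ?_,
    tendstoLocallyUniformly_of_tendsto_prod_nhds <|
      tendsto_prod_range_elemFactor_div hζpos hζsum (fun n j hj => (hxgt n j hj).le) hxlim⟩
  refine differentiableOn_univ.1 <| (tendstoLocallyUniformlyOn_univ.2 hpartial).differentiableOn
    (Eventually.of_forall fun n => Differentiable.differentiableOn ?_) isOpen_univ
  exact Differentiable.fun_finsetProd fun j _ =>
    (differentiable_elemFactor m).comp (differentiable_id.div_const _)

/-- Theorem 5.7 (convergence to the regularized characteristic function): if
`Σ_j ζ_j^{−k} < ∞` and the zeros `x_{j;n}` satisfy `ζ_j < x_{j;n}` and `x_{j;n} → ζ_j`,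
then `∏_{j=1}^∞ E_{k−1}(z/ζ_j)` defines an entire function and
`∏_{j=1}^n E_{k−1}(z/x_{j;n})` converges to it locally uniformly on `ℂ`. -/
theorem regularized_characteristic_function_convergence
    (k : ℕ) (hk : 1 ≤ k)
    (ζ : ℕ → ℝ)
    (hζpos : ∀ j, 0 < ζ j)
    (hζmono : StrictMono ζ)
    (hζsum : Summable (fun j : ℕ => 1 / ζ j ^ k))
    (x : ℕ → ℕ → ℝ)
    (hxmono : ∀ n, ∀ i j, i < j → j < n → x n i < x n j)
    (hxgt : ∀ n, ∀ j, j < n → ζ j < x n j)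
    (hxlim : ∀ j, Tendsto (fun n => x n j) atTop (nhds (ζ j))) :
    (∀ z : ℂ, Multipliable (fun j : ℕ => elemFactor (k - 1) (z / (ζ j : ℂ)))) ∧
    Differentiable ℂ (fun z : ℂ => ∏' j : ℕ, elemFactor (k - 1) (z / (ζ j : ℂ))) ∧
    TendstoLocallyUniformly
      (fun (n : ℕ) (z : ℂ) => ∏ j ∈ Finset.range n, elemFactor (k - 1) (z / (x n j : ℂ)))
      (fun z : ℂ => ∏' j : ℕ, elemFactor (k - 1) (z / (ζ j : ℂ)))
      atTop :=
  regularized_characteristic_function_convergence_general k hk ζ hζpos hζsum x hxgt hxlim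
end

section
/- Let (ζ_j)_{j≥1} be a strictly increasing sequence of positive real numbers with Σ_{j=1}^∞ 1/ζ_j < ∞, and for each n≥1 let x_{1;n} < ⋯ < x_{n;n} be real numbers with ζ_j < x_{j;n} for 1≤j≤n and lim_{n→∞} x_{j;n} = ζ_j for each fixed j. Then z ↦ ∏_{j=1}^n (1 − z/x_{j;n}) converges locally uniformly on ℂ to the entire function z ↦ ∏_{j=1}^∞ (1 − z/ζ_j). -/
open Finset Filter Topology


lemma aux_prod_one_add_sub_one_norm (u : ℕ → ℂ) (s : Finset ℕ) :
    ‖(∏ j ∈ s, (1 + u j)) - 1‖ ≤ Real.exp (∑ j ∈ s, ‖u j‖) - 1 := by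
  classical
  induction s using Finset.induction with
  | empty => simp
  | @insert i s hi ih =>
    rw [Finset.prod_insert hi, Finset.sum_insert hi]
    have h1 : (1 + u i) * (∏ j ∈ s, (1 + u j)) - 1
        = (1 + u i) * ((∏ j ∈ s, (1 + u j)) - 1) + u i := by ring
    rw [h1]
    have h2 : ‖(1 + u i) * ((∏ j ∈ s, (1 + u j)) - 1) + u i‖
        ≤ (1 + ‖u i‖) * ‖(∏ j ∈ s, (1 + u j)) - 1‖ + ‖u i‖ := by
      refine (norm_add_le _ _).trans ?_
      gcongr
      rw [norm_mul]
      gcongr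
      exact (norm_add_le _ _).trans (by simp)
    refine h2.trans ?_
    have h3 : ‖(∏ j ∈ s, (1 + u j)) - 1‖ ≤ Real.exp (∑ j ∈ s, ‖u j‖) - 1 := ih
    have h4 : (1 : ℝ) ≤ Real.exp (∑ j ∈ s, ‖u j‖) :=
      Real.one_le_exp (Finset.sum_nonneg fun j _ => norm_nonneg _)
    have h5 : 1 + ‖u i‖ ≤ Real.exp ‖u i‖ := by
      have := Real.add_one_le_exp ‖u i‖; linarith
    have h6 : Real.exp (‖u i‖ + ∑ j ∈ s, ‖u j‖) = Real.exp ‖u i‖ * Real.exp (∑ j ∈ s, ‖u j‖) :=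
      Real.exp_add _ _
    have h7 : 0 ≤ ‖u i‖ := norm_nonneg _
    nlinarith [norm_nonneg ((∏ j ∈ s, (1 + u j)) - 1)]

lemma aux_prod_sub_prod_norm (a b : ℕ → ℂ) (M : ℕ → ℝ) (s : Finset ℕ)
    (ha : ∀ j ∈ s, ‖a j‖ ≤ M j) (hb : ∀ j ∈ s, ‖b j‖ ≤ M j) (hM : ∀ j ∈ s, 1 ≤ M j) :
    ‖(∏ j ∈ s, a j) - ∏ j ∈ s, b j‖ ≤ (∏ j ∈ s, M j) * ∑ j ∈ s, ‖a j - b j‖ := by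
  classical
  induction s using Finset.induction with
  | empty => simp
  | @insert i s hi ih =>
    have ha' := fun j hj => ha j (Finset.mem_insert_of_mem hj)
    have hb' := fun j hj => hb j (Finset.mem_insert_of_mem hj)
    have hM' := fun j hj => hM j (Finset.mem_insert_of_mem hj)
    have hMi := hM i (Finset.mem_insert_self i s)
    have hai := ha i (Finset.mem_insert_self i s)
    have hbi := hb i (Finset.mem_insert_self i s)
    have hprodM : (1:ℝ) ≤ ∏ j ∈ s, M j := by
      calc (1:ℝ) = ∏ _j ∈ s, 1 := by simp
      _ ≤ ∏ j ∈ s, M j := Finset.prod_le_prod (by norm_num) (fun j hj => hM' j hj)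
    have hnormb : ‖∏ j ∈ s, b j‖ ≤ ∏ j ∈ s, M j := by
      rw [norm_prod]
      exact Finset.prod_le_prod (fun j _ => norm_nonneg _) hb'
    rw [Finset.prod_insert hi, Finset.prod_insert hi, Finset.prod_insert hi,
      Finset.sum_insert hi]
    have key : a i * (∏ j ∈ s, a j) - b i * (∏ j ∈ s, b j)
        = a i * ((∏ j ∈ s, a j) - ∏ j ∈ s, b j) + (a i - b i) * ∏ j ∈ s, b j := by ring
    rw [key]
    refine (norm_add_le _ _).trans ?_
    rw [norm_mul, norm_mul]
    have h1 : ‖a i‖ * ‖(∏ j ∈ s, a j) - ∏ j ∈ s, b j‖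
        ≤ M i * ((∏ j ∈ s, M j) * ∑ j ∈ s, ‖a j - b j‖) := by
      refine mul_le_mul hai (ih ha' hb' hM') (norm_nonneg _) (by linarith)
    have h2 : ‖a i - b i‖ * ‖∏ j ∈ s, b j‖ ≤ ‖a i - b i‖ * ∏ j ∈ s, M j :=
      mul_le_mul_of_nonneg_left hnormb (norm_nonneg _)
    have h2' : ‖a i - b i‖ * ∏ j ∈ s, M j ≤ M i * ((∏ j ∈ s, M j) * ‖a i - b i‖) := by
      nlinarith [mul_nonneg (mul_nonneg (sub_nonneg.2 hMi) (le_trans zero_le_one hprodM)) (norm_nonneg (a i - b i))]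
    refine le_trans (add_le_add h1 (h2.trans h2')) (le_of_eq (by ring))


lemma aux_prod_one_add_le (c : ℕ → ℝ) (hc : ∀ j, 0 < c j)
    (hsum : Summable fun j : ℕ => 1 / c j) (R : ℝ) (hR : 0 ≤ R) (s : Finset ℕ) :
    ∏ j ∈ s, (1 + R * (1 / c j)) ≤ Real.exp (R * ∑' j, 1 / c j) := by
  calc ∏ j ∈ s, (1 + R * (1 / c j))
      ≤ ∏ j ∈ s, Real.exp (R * (1 / c j)) := by
        refine Finset.prod_le_prod (fun j _ => ?_) (fun j _ => ?_)
        · have h1 : 0 ≤ R * (1 / c j) := mul_nonneg hR (le_of_lt (one_div_pos.mpr (hc j)))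
          linarith
        · have := Real.add_one_le_exp (R * (1 / c j)); linarith
    _ = Real.exp (∑ j ∈ s, R * (1 / c j)) := (Real.exp_sum _ _).symm
    _ ≤ Real.exp (R * ∑' j, 1 / c j) := by
        rw [Real.exp_le_exp, ← Finset.mul_sum]
        exact mul_le_mul_of_nonneg_left
          (Summable.sum_le_tsum s (fun j _ => le_of_lt (one_div_pos.mpr (hc j))) hsum) hR

lemma aux_diff_prod (c : ℕ → ℝ) (s : Finset ℕ) :
    Differentiable ℂ (fun z : ℂ => ∏ j ∈ s, (1 - z / (c j : ℂ))) := by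
  classical
  induction s using Finset.induction with
  | empty => simpa using differentiable_const (1 : ℂ)
  | @insert i s hi ih =>
    simp_rw [Finset.prod_insert hi]
    exact ((differentiable_const 1).sub (differentiable_id.div_const _)).mul ih

lemma aux_norm_one_sub_div (c : ℝ) (hc : 0 < c) (z : ℂ) (R : ℝ) (hz : ‖z‖ ≤ R) :
    ‖(1 : ℂ) - z / (c : ℂ)‖ ≤ 1 + R * (1 / c) := by
  refine (norm_sub_le _ _).trans ?_
  rw [norm_one, norm_div, Complex.norm_real, Real.norm_eq_abs, abs_of_pos hc]
  have : ‖z‖ / c ≤ R * (1 / c) := by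
    rw [mul_one_div]; gcongr
  linarith

lemma aux_norm_prod_le (c : ℕ → ℝ) (hc : ∀ j, 0 < c j)
    (hsum : Summable fun j : ℕ => 1 / c j) (z : ℂ) (R : ℝ) (hz : ‖z‖ ≤ R) (hR : 0 ≤ R)
    (s : Finset ℕ) :
    ‖∏ j ∈ s, ((1 : ℂ) - z / (c j : ℂ))‖ ≤ Real.exp (R * ∑' j, 1 / c j) := by
  rw [norm_prod]
  calc ∏ j ∈ s, ‖(1 : ℂ) - z / (c j : ℂ)‖
      ≤ ∏ j ∈ s, (1 + R * (1 / c j)) :=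
        Finset.prod_le_prod (fun j _ => norm_nonneg _)
          (fun j _ => aux_norm_one_sub_div (c j) (hc j) z R hz)
    _ ≤ ∏ j ∈ s, Real.exp (R * (1 / c j)) := by
        refine Finset.prod_le_prod (fun j _ => ?_) (fun j _ => ?_)
        · have h1 : 0 ≤ R * (1 / c j) := mul_nonneg hR (le_of_lt (one_div_pos.mpr (hc j)))
          linarith
        · have := Real.add_one_le_exp (R * (1 / c j)); linarith
    _ = Real.exp (∑ j ∈ s, R * (1 / c j)) := (Real.exp_sum _ _).symm
    _ ≤ Real.exp (R * ∑' j, 1 / c j) := by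
        rw [Real.exp_le_exp, ← Finset.mul_sum]
        exact mul_le_mul_of_nonneg_left
          (Summable.sum_le_tsum s (fun j _ => le_of_lt (one_div_pos.mpr (hc j))) hsum) hR

lemma aux_multipliable_one_sub (c : ℕ → ℝ) (hc : ∀ j, 0 < c j)
    (hsum : Summable fun j : ℕ => 1 / c j) (z : ℂ) :
    Multipliable (fun j : ℕ => 1 - z / (c j : ℂ)) := by
  set B : ℝ := Real.exp (‖z‖ * ∑' j, 1 / c j) with hBdef
  have hB : 0 < B := Real.exp_pos _
  have hbound : ∀ s : Finset ℕ, ‖∏ j ∈ s, ((1 : ℂ) - z / (c j : ℂ))‖ ≤ B :=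
    fun s => aux_norm_prod_le c hc hsum z ‖z‖ le_rfl (norm_nonneg z) s
  have hcauchy : CauchySeq (fun s : Finset ℕ => ∏ j ∈ s, ((1 : ℂ) - z / (c j : ℂ))) := by
    rw [Metric.cauchySeq_iff']
    intro ε hε
    set δ : ℝ := Real.log (1 + ε / (2 * B)) with hδdef
    have hεB : 0 < ε / (2 * B) := by positivity
    have hδpos : 0 < δ := Real.log_pos (by linarith)
    have hgsum : Summable (fun j : ℕ => ‖z‖ * (1 / c j)) := hsum.mul_left _
    obtain ⟨N, hN⟩ := summable_iff_vanishing.mp hgsum (Metric.ball 0 δ)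
      (Metric.ball_mem_nhds 0 hδpos)
    refine ⟨N, fun s hs => ?_⟩
    rw [dist_eq_norm]
    have hsplit : (∏ j ∈ s, ((1 : ℂ) - z / (c j : ℂ)))
        = (∏ j ∈ N, ((1 : ℂ) - z / (c j : ℂ))) * ∏ j ∈ s \ N, ((1 : ℂ) - z / (c j : ℂ)) := by
      rw [mul_comm, Finset.prod_sdiff hs]
    rw [hsplit]
    have : (∏ j ∈ N, ((1 : ℂ) - z / (c j : ℂ))) * (∏ j ∈ s \ N, ((1 : ℂ) - z / (c j : ℂ)))
        - (∏ j ∈ N, ((1 : ℂ) - z / (c j : ℂ)))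
        = (∏ j ∈ N, ((1 : ℂ) - z / (c j : ℂ)))
          * ((∏ j ∈ s \ N, ((1 : ℂ) - z / (c j : ℂ))) - 1) := by ring
    rw [this, norm_mul]
    have htail : ‖(∏ j ∈ s \ N, ((1 : ℂ) - z / (c j : ℂ))) - 1‖ < ε / (2 * B) := by
      have hdisj : Disjoint (s \ N) N := Finset.sdiff_disjoint
      have hsum_t : ∑ j ∈ s \ N, ‖z‖ * (1 / c j) < δ := by
        have := hN (s \ N) hdisj
        rw [Metric.mem_ball, Real.dist_eq, sub_zero] at this
        exact (le_abs_self _).trans_lt this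
      have hsub : ∀ j : ℕ, (1 : ℂ) - z / (c j : ℂ) = 1 + -(z / (c j : ℂ)) := fun j => by ring
      have hnorm : ∀ j : ℕ, ‖-(z / (c j : ℂ))‖ = ‖z‖ * (1 / c j) := by
        intro j
        rw [norm_neg, norm_div, Complex.norm_real, Real.norm_eq_abs,
          abs_of_pos (hc j), mul_one_div]
      calc ‖(∏ j ∈ s \ N, ((1 : ℂ) - z / (c j : ℂ))) - 1‖
          = ‖(∏ j ∈ s \ N, (1 + -(z / (c j : ℂ)))) - 1‖ := by simp_rw [hsub]
        _ ≤ Real.exp (∑ j ∈ s \ N, ‖-(z / (c j : ℂ))‖) - 1 :=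
            aux_prod_one_add_sub_one_norm _ _
        _ = Real.exp (∑ j ∈ s \ N, ‖z‖ * (1 / c j)) - 1 := by simp_rw [hnorm]
        _ < Real.exp δ - 1 := by
            have := Real.exp_lt_exp.mpr hsum_t; linarith
        _ = ε / (2 * B) := by rw [hδdef, Real.exp_log (by linarith)]; ring
    calc ‖∏ j ∈ N, ((1 : ℂ) - z / (c j : ℂ))‖ * ‖(∏ j ∈ s \ N, ((1 : ℂ) - z / (c j : ℂ))) - 1‖
        ≤ B * ‖(∏ j ∈ s \ N, ((1 : ℂ) - z / (c j : ℂ))) - 1‖ :=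
          mul_le_mul_of_nonneg_right (hbound N) (norm_nonneg _)
      _ < B * (ε / (2 * B)) := by
          exact mul_lt_mul_of_pos_left htail hB
      _ = ε / 2 := by field_simp
      _ < ε := by linarith
  obtain ⟨a, ha⟩ := cauchySeq_tendsto_of_complete hcauchy
  exact ⟨a, ha⟩


/-- Corollary 5.9 (trace class case, convergence to the characteristic function): if
`Σ_j 1/ζ_j < ∞` and the zeros `x_{j;n}` satisfy `ζ_j < x_{j;n}` and `x_{j;n} → ζ_j`,
then `∏_{j=1}^n (1 − z/x_{j;n})` converges locally uniformly on `ℂ` to the entire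
function `∏_{j=1}^∞ (1 − z/ζ_j)`. -/
theorem characteristic_function_convergence_trace_class
    (ζ : ℕ → ℝ)
    (hζpos : ∀ j, 0 < ζ j)
    (hζmono : StrictMono ζ)
    (hζsum : Summable (fun j : ℕ => 1 / ζ j))
    (x : ℕ → ℕ → ℝ)
    (hxmono : ∀ n, ∀ i j, i < j → j < n → x n i < x n j)
    (hxgt : ∀ n, ∀ j, j < n → ζ j < x n j)
    (hxlim : ∀ j, Tendsto (fun n => x n j) atTop (nhds (ζ j))) :
    (∀ z : ℂ, Multipliable (fun j : ℕ => 1 - z / (ζ j : ℂ))) ∧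
    Differentiable ℂ (fun z : ℂ => ∏' j : ℕ, (1 - z / (ζ j : ℂ))) ∧
    TendstoLocallyUniformly
      (fun (n : ℕ) (z : ℂ) => ∏ j ∈ Finset.range n, (1 - z / (x n j : ℂ)))
      (fun z : ℂ => ∏' j : ℕ, (1 - z / (ζ j : ℂ)))
      atTop := by
  have hmult : ∀ z : ℂ, Multipliable (fun j : ℕ => 1 - z / (ζ j : ℂ)) :=
    fun z => aux_multipliable_one_sub ζ hζpos hζsum z
  -- the defect sums `d n` tend to zero
  set d : ℕ → ℝ := fun n => ∑ j ∈ Finset.range n, (1 / ζ j - 1 / x n j) with hd_def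
  have hxpos : ∀ n j, j < n → 0 < x n j := fun n j hj => (hζpos j).trans (hxgt n j hj)
  have hterm_nonneg : ∀ n j, j < n → 0 ≤ 1 / ζ j - 1 / x n j := by
    intro n j hj
    have := one_div_lt_one_div_of_lt (hζpos j) (hxgt n j hj)
    linarith
  have hterm_le : ∀ n j, j < n → 1 / ζ j - 1 / x n j ≤ 1 / ζ j := by
    intro n j hj
    have := one_div_pos.mpr (hxpos n j hj)
    linarith
  have hd0 : Tendsto d atTop (𝓝 0) := by
    set f : ℕ → ℕ → ℝ := fun n j => if j < n then 1 / ζ j - 1 / x n j else 0 with hf_def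
    have h_eq : ∀ n, (∑' j, f n j) = d n := by
      intro n
      rw [tsum_eq_sum (s := Finset.range n)
        (fun j hj => by simp [hf_def, Finset.mem_range.not.mp hj])]
      exact Finset.sum_congr rfl fun j hj => by simp [hf_def, Finset.mem_range.mp hj]
    have h_lim : ∀ j : ℕ, Tendsto (f · j) atTop (𝓝 0) := by
      intro j
      have h1 : Tendsto (fun n => 1 / ζ j - 1 / x n j) atTop (𝓝 0) := by
        have h2 : Tendsto (fun n => 1 / x n j) atTop (𝓝 (1 / ζ j)) :=
          tendsto_const_nhds.div (hxlim j) (hζpos j).ne'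
        have h1' : Tendsto (fun n => 1 / ζ j - 1 / x n j) atTop (𝓝 (1 / ζ j - 1 / ζ j)) :=
          Tendsto.sub tendsto_const_nhds h2
        simpa using h1'
      refine h1.congr' ?_
      filter_upwards [eventually_ge_atTop (j + 1)] with n hn
      simp [hf_def, Nat.lt_of_succ_le hn]
    have h_bd : ∀ n j, ‖f n j‖ ≤ 1 / ζ j := by
      intro n j
      rw [Real.norm_eq_abs]
      by_cases hj : j < n
      · rw [hf_def]
        simp only [if_pos hj]
        rw [abs_of_nonneg (hterm_nonneg n j hj)]
        exact hterm_le n j hj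
      · rw [hf_def]
        simp only [if_neg hj, abs_zero]
        exact le_of_lt (one_div_pos.mpr (hζpos j))
    have h := tendsto_tsum_of_dominated_convergence (f := f) (g := fun _ => 0)
      hζsum h_lim (Eventually.of_forall h_bd)
    rw [tsum_zero] at h
    exact h.congr h_eq
  -- the tails `t n` tend to zero
  set t : ℕ → ℝ := fun n => ∑' k, 1 / ζ (k + n) with ht_def
  have ht0 : Tendsto t atTop (𝓝 0) := tendsto_sum_nat_add (fun j => 1 / ζ j)
  -- uniform convergence on closed balls
  have key : ∀ R : ℝ, 0 ≤ R → TendstoUniformlyOn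
      (fun (n : ℕ) (z : ℂ) => ∏ j ∈ Finset.range n, (1 - z / (x n j : ℂ)))
      (fun z : ℂ => ∏' j : ℕ, (1 - z / (ζ j : ℂ))) atTop (Metric.closedBall 0 R) := by
    intro R hR
    set B : ℝ := Real.exp (R * ∑' j, 1 / ζ j) with hB_def
    have hB : 0 < B := Real.exp_pos _
    have hPB : ∀ (z : ℂ), ‖z‖ ≤ R → ∀ s : Finset ℕ,
        ‖∏ j ∈ s, ((1 : ℂ) - z / (ζ j : ℂ))‖ ≤ B :=
      fun z hz s => aux_norm_prod_le ζ hζpos hζsum z R hz hR s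
    -- Estimate 1: replacing `x n j` by `ζ j`
    have EstP : ∀ n (z : ℂ), ‖z‖ ≤ R →
        ‖(∏ j ∈ Finset.range n, (1 - z / (x n j : ℂ)))
          - ∏ j ∈ Finset.range n, (1 - z / (ζ j : ℂ))‖ ≤ B * (R * d n) := by
      intro n z hz
      have hMa : ∀ j ∈ Finset.range n, ‖1 - z / (x n j : ℂ)‖ ≤ 1 + R * (1 / ζ j) := by
        intro j hj
        have hj' := Finset.mem_range.mp hj
        refine (aux_norm_one_sub_div (x n j) (hxpos n j hj') z R hz).trans ?_
        have h3 : 1 / x n j ≤ 1 / ζ j :=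
          le_of_lt (one_div_lt_one_div_of_lt (hζpos j) (hxgt n j hj'))
        nlinarith [mul_le_mul_of_nonneg_left h3 hR]
      have hMb : ∀ j ∈ Finset.range n, ‖1 - z / (ζ j : ℂ)‖ ≤ 1 + R * (1 / ζ j) :=
        fun j _ => aux_norm_one_sub_div (ζ j) (hζpos j) z R hz
      have hM1 : ∀ j ∈ Finset.range n, (1:ℝ) ≤ 1 + R * (1 / ζ j) := by
        intro j _
        have h1 : 0 ≤ R * (1 / ζ j) := mul_nonneg hR (le_of_lt (one_div_pos.mpr (hζpos j)))
        linarith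
      have hmain := aux_prod_sub_prod_norm (fun j => 1 - z / (x n j : ℂ))
        (fun j => 1 - z / (ζ j : ℂ)) (fun j => 1 + R * (1 / ζ j)) (Finset.range n) hMa hMb hM1
      refine hmain.trans ?_
      have h1 := aux_prod_one_add_le ζ hζpos hζsum R hR (Finset.range n)
      have h2 : ∑ j ∈ Finset.range n, ‖(1 - z / (x n j : ℂ)) - (1 - z / (ζ j : ℂ))‖
          ≤ R * d n := by
        simp only [hd_def]
        rw [Finset.mul_sum]
        refine Finset.sum_le_sum fun j hj => ?_
        have hj' := Finset.mem_range.mp hj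
        have hab : (1 - z / (x n j : ℂ)) - (1 - z / (ζ j : ℂ))
            = z * (((1 / ζ j - 1 / x n j : ℝ)) : ℂ) := by push_cast; ring
        rw [hab, norm_mul, Complex.norm_real, Real.norm_eq_abs,
          abs_of_nonneg (hterm_nonneg n j hj')]
        exact mul_le_mul_of_nonneg_right hz (hterm_nonneg n j hj')
      have hsum_nonneg : 0 ≤ ∑ j ∈ Finset.range n,
          ‖(1 - z / (x n j : ℂ)) - (1 - z / (ζ j : ℂ))‖ :=
        Finset.sum_nonneg fun j _ => norm_nonneg _
      exact mul_le_mul h1 h2 hsum_nonneg hB.le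
    -- Estimate 2: tail of the infinite product
    have EstQ : ∀ n (z : ℂ), ‖z‖ ≤ R →
        ‖(∏ j ∈ Finset.range n, (1 - z / (ζ j : ℂ)))
          - ∏' j : ℕ, (1 - z / (ζ j : ℂ))‖ ≤ B * (Real.exp (R * t n) - 1) := by
      intro n z hz
      have htend : Tendsto (fun m => ∏ j ∈ Finset.range (n + m), (1 - z / (ζ j : ℂ)))
          atTop (𝓝 (∏' j : ℕ, (1 - z / (ζ j : ℂ)))) := by
        have h0 := (hmult z).hasProd.tendsto_prod_nat
        have h1 : Tendsto (fun m : ℕ => n + m) atTop atTop := by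
          simpa [add_comm] using tendsto_add_atTop_nat n
        exact h0.comp h1
      have hbd : ∀ m, ‖(∏ j ∈ Finset.range n, (1 - z / (ζ j : ℂ)))
          - ∏ j ∈ Finset.range (n + m), (1 - z / (ζ j : ℂ))‖
            ≤ B * (Real.exp (R * t n) - 1) := by
        intro m
        rw [Finset.prod_range_add]
        have hsplit : (∏ j ∈ Finset.range n, (1 - z / (ζ j : ℂ)))
            - (∏ j ∈ Finset.range n, (1 - z / (ζ j : ℂ)))
              * ∏ i ∈ Finset.range m, (1 - z / (ζ (n + i) : ℂ))
            = (∏ j ∈ Finset.range n, (1 - z / (ζ j : ℂ)))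
              * (1 - ∏ i ∈ Finset.range m, (1 - z / (ζ (n + i) : ℂ))) := by ring
        rw [hsplit, norm_mul]
        have htail : ‖1 - ∏ i ∈ Finset.range m, (1 - z / (ζ (n + i) : ℂ))‖
            ≤ Real.exp (R * t n) - 1 := by
          rw [norm_sub_rev]
          have hsub : ∀ i : ℕ, (1 : ℂ) - z / (ζ (n + i) : ℂ)
              = 1 + -(z / (ζ (n + i) : ℂ)) := fun i => by ring
          have hstep : ‖(∏ i ∈ Finset.range m, (1 - z / (ζ (n + i) : ℂ))) - 1‖
              ≤ Real.exp (∑ i ∈ Finset.range m, ‖-(z / (ζ (n + i) : ℂ))‖) - 1 := by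
            simp_rw [hsub]
            exact aux_prod_one_add_sub_one_norm _ _
          refine hstep.trans ?_
          have hsum_le : ∑ i ∈ Finset.range m, ‖-(z / (ζ (n + i) : ℂ))‖ ≤ R * t n := by
            have hnorm : ∀ i : ℕ, ‖-(z / (ζ (n + i) : ℂ))‖ = ‖z‖ * (1 / ζ (n + i)) := by
              intro i
              rw [norm_neg, norm_div, Complex.norm_real, Real.norm_eq_abs,
                abs_of_pos (hζpos (n + i)), mul_one_div]
            simp_rw [hnorm]
            calc ∑ i ∈ Finset.range m, ‖z‖ * (1 / ζ (n + i))
                ≤ ∑ i ∈ Finset.range m, R * (1 / ζ (n + i)) := by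
                  refine Finset.sum_le_sum fun i _ => ?_
                  exact mul_le_mul_of_nonneg_right hz
                    (le_of_lt (one_div_pos.mpr (hζpos (n + i))))
              _ = R * ∑ i ∈ Finset.range m, 1 / ζ (i + n) := by
                  rw [← Finset.mul_sum]
                  congr 1
                  exact Finset.sum_congr rfl fun i _ => by rw [add_comm]
              _ ≤ R * t n := by
                  refine mul_le_mul_of_nonneg_left ?_ hR
                  exact Summable.sum_le_tsum (Finset.range m)
                    (fun i _ => le_of_lt (one_div_pos.mpr (hζpos (i + n))))
                    ((summable_nat_add_iff n).mpr hζsum)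
          have := Real.exp_le_exp.mpr hsum_le
          linarith
        exact mul_le_mul (hPB z hz _) htail (norm_nonneg _) hB.le
      have hnormtend : Tendsto (fun m => ‖(∏ j ∈ Finset.range n, (1 - z / (ζ j : ℂ)))
          - ∏ j ∈ Finset.range (n + m), (1 - z / (ζ j : ℂ))‖) atTop
          (𝓝 ‖(∏ j ∈ Finset.range n, (1 - z / (ζ j : ℂ)))
            - ∏' j : ℕ, (1 - z / (ζ j : ℂ))‖) :=
        (tendsto_const_nhds.sub htend).norm
      exact le_of_tendsto hnormtend (Eventually.of_forall hbd)
    -- conclude uniform convergence on the closed ball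
    rw [Metric.tendstoUniformlyOn_iff]
    intro ε hε
    have hc : Tendsto (fun n => B * (Real.exp (R * t n) - 1) + B * (R * d n))
        atTop (𝓝 0) := by
      have h1 : Tendsto (fun n => B * (R * d n)) atTop (𝓝 (B * (R * 0))) :=
        ((hd0.const_mul R).const_mul B)
      have h2 : Tendsto (fun n => Real.exp (R * t n)) atTop (𝓝 (Real.exp (R * 0))) :=
        (Real.continuous_exp.tendsto _).comp (ht0.const_mul R)
      have h3 : Tendsto (fun n => B * (Real.exp (R * t n) - 1)) atTop
          (𝓝 (B * (Real.exp (R * 0) - 1))) := (h2.sub_const 1).const_mul B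
      have := h3.add h1
      simpa using this
    filter_upwards [hc.eventually_lt_const hε] with n hn z hz
    have hz' : ‖z‖ ≤ R := by
      simpa [Metric.mem_closedBall, dist_zero_right] using hz
    calc dist (∏' j : ℕ, (1 - z / (ζ j : ℂ)))
          (∏ j ∈ Finset.range n, (1 - z / (x n j : ℂ)))
        ≤ dist (∏' j : ℕ, (1 - z / (ζ j : ℂ)))
            (∏ j ∈ Finset.range n, (1 - z / (ζ j : ℂ)))
          + dist (∏ j ∈ Finset.range n, (1 - z / (ζ j : ℂ)))
            (∏ j ∈ Finset.range n, (1 - z / (x n j : ℂ))) := dist_triangle _ _ _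
      _ ≤ B * (Real.exp (R * t n) - 1) + B * (R * d n) := by
          refine add_le_add ?_ ?_
          · rw [dist_eq_norm, norm_sub_rev]
            exact EstQ n z hz'
          · rw [dist_eq_norm, norm_sub_rev]
            exact EstP n z hz'
      _ < ε := hn
  -- locally uniform convergence on `ℂ`
  have h3 : TendstoLocallyUniformly
      (fun (n : ℕ) (z : ℂ) => ∏ j ∈ Finset.range n, (1 - z / (x n j : ℂ)))
      (fun z : ℂ => ∏' j : ℕ, (1 - z / (ζ j : ℂ))) atTop := by
    rw [tendstoLocallyUniformly_iff_forall_isCompact]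
    intro K hK
    obtain ⟨R, hRK⟩ := hK.isBounded.subset_closedBall 0
    exact (key (max R 0) (le_max_right _ _)).mono
      (hRK.trans (Metric.closedBall_subset_closedBall (le_max_left _ _)))
  refine ⟨hmult, ?_, h3⟩
  have hdiffn : ∀ n : ℕ, Differentiable ℂ
      (fun z : ℂ => ∏ j ∈ Finset.range n, (1 - z / (x n j : ℂ))) :=
    fun n => aux_diff_prod (x n) (Finset.range n)
  have hdo := (tendstoLocallyUniformlyOn_univ.mpr h3).differentiableOn
    (Eventually.of_forall fun n => (hdiffn n).differentiableOn) isOpen_univ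
  exact differentiableOn_univ.mp hdo
end

section
/- Fix 0<q<1 and α>−1. For any real parameter β>−1 let p_n^{(β)} denote the monic q-Laguerre polynomials, defined by p_{−1}^{(β)}=0, p_0^{(β)}=1 and p_{n+1}^{(β)}(x) = (x − b_n^{(β)}) p_n^{(β)}(x) − d_n^{(β)} p_{n−1}^{(β)}(x) for n≥0, where b_n^{(β)} = q^{−2n−β−1}(1−q^{n+1}+q(1−q^{n+β})) and d_n^{(β)} = q^{−4n−2β+1}(1−q^n)(1−q^{n+β}). Define p̃_n^{(α)}(x) = p_n^{(α+1)}(x) + μ̃_n^{(α)} p_{n−1}^{(α+1)}(x) for n≥0. Then the sequence (p̃_n^{(α)}) satisfies the three-term recurrence p̃_{n+1}^{(α)}(x) = (x − (λ̃_n^{(α)} + μ̃_n^{(α)})) p̃_n^{(α)}(x) − λ̃_{n−1}^{(α)} μ̃_n^{(α)} p̃_{n−1}^{(α)}(x) for all n≥1, together with p̃_1^{(α)}(x) = (x − λ̃_0^{(α)}) p̃_0^{(α)}(x). -/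
/-!
Set `p̃_{n+1} = p_{n+1} + μ_{n+1} p_n`. If `b_n = λ_n + μ_{n+1}` and `d_n = λ_n μ_n`, the recurrence
of `p` says exactly that `p̃_{n+1} = x p_n − λ_n p̃_n` (a factorization of the Jacobi operator
of `p`), and eliminating `p` between these two first-order relations gives the three-term
recurrence of `p̃`. For the q-Laguerre coefficients with `β = α + 1`, both identities reduce to
the functional equation `(1 − q^u) γ(u+1, v) = (1 − q^{u+v}) γ(u, v)`, a consequence of
`(a;q)_∞ = (1 − a)(aq;q)_∞`, together with `γ(n, α+1) < 1` (so that `r_n ≠ 0`), which comes from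
the strict monotonicity of `a ↦ (a;q)_∞` on `[0, 1]`.
-/

open Finset

/-- The finite q-Pochhammer symbol `(a;q)_n = ∏_{k=0}^{n−1} (1 − a q^k)`. -/
noncomputable def qPochN (q a : ℝ) (n : ℕ) : ℝ :=
  ∏ k ∈ Finset.range n, (1 - a * q ^ k)

/-- The infinite q-Pochhammer symbol `(a;q)_∞ = ∏_{k=0}^∞ (1 − a q^k)`. -/
noncomputable def qPochInf (q a : ℝ) : ℝ :=
  ∏' k : ℕ, (1 - a * q ^ k)

/-- `γ(u,v;q) = (q^u;q)_∞/(q^{u+v};q)_∞`. -/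
noncomputable def qgamma (q u v : ℝ) : ℝ :=
  qPochInf q (q ^ u) / qPochInf q (q ^ (u + v))

/-- `r_n^{(α)} = (1−γ(n+1,α+1;q))/(1−γ(n,α+1;q))`. -/
noncomputable def rQL (q α : ℝ) (n : ℕ) : ℝ :=
  (1 - qgamma q ((n : ℝ) + 1) (α + 1)) / (1 - qgamma q (n : ℝ) (α + 1))

/-- The birth rates `λ̃_n^{(α)} = q^{−2n−α−1}(1−q^{n+α+1})/r_n^{(α)}`. -/
noncomputable def lamQL (q α : ℝ) (n : ℕ) : ℝ :=
  q ^ (-(2 * (n : ℝ)) - α - 1) * (1 - q ^ ((n : ℝ) + α + 1)) / rQL q α n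

/-- The death rates `μ̃_n^{(α)} = q^{−2n−α}(1−q^n) r_n^{(α)}`. -/
noncomputable def muQL (q α : ℝ) (n : ℕ) : ℝ :=
  q ^ (-(2 * (n : ℝ)) - α) * (1 - q ^ (n : ℝ)) * rQL q α n

/-- `π̃_n^{(α)} = ∏_{k=0}^{n−1} λ̃_k^{(α)}/μ̃_{k+1}^{(α)}` (with `π̃_0 = 1`). -/
noncomputable def piQL (q α : ℝ) (n : ℕ) : ℝ :=
  ∏ k ∈ Finset.range n, lamQL q α k / muQL q α (k + 1)

/-- `T̃_k^{(α)} = Σ_{j=0}^{k} π̃_j^{(α)}`. -/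
noncomputable def TQL (q α : ℝ) (k : ℕ) : ℝ :=
  ∑ j ∈ Finset.range (k + 1), piQL q α j

/-- The descending q-Pochhammer symbol `(q^k;q^{−1})_ℓ = ∏_{i=0}^{ℓ−1}(1−q^{k−i})`. -/
noncomputable def qPochDesc (q : ℝ) (k ℓ : ℕ) : ℝ :=
  ∏ i ∈ Finset.range ℓ, (1 - q ^ ((k : ℝ) - (i : ℝ)))

namespace BirthDeath

variable {R : Type*} [CommRing R] {x : R} {p pt lam mu : ℕ → R}

theorem succ_eq_mul_sub_mul
    (h1 : p 1 = (x - (lam 0 + mu 1)) * p 0)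
    (h : ∀ n, p (n + 2) =
      (x - (lam (n + 1) + mu (n + 2))) * p (n + 1) - lam (n + 1) * mu (n + 1) * p n)
    (hpt0 : pt 0 = p 0) (hpt : ∀ n, pt (n + 1) = p (n + 1) + mu (n + 1) * p n) (n : ℕ) :
    pt (n + 1) = x * p n - lam n * pt n := by
  cases n with
  | zero => rw [hpt, hpt0, h1]; ring
  | succ n => rw [hpt, h, hpt]; ring

theorem recurrence_of_factorization
    (hpt : ∀ n, pt (n + 1) = p (n + 1) + mu (n + 1) * p n)
    (hstep : ∀ n, pt (n + 1) = x * p n - lam n * pt n) (n : ℕ) :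
    pt (n + 2) =
      (x - (lam (n + 1) + mu (n + 1))) * pt (n + 1) - lam n * mu (n + 1) * pt n := by
  linear_combination hstep (n + 1) - x * hpt n + mu (n + 1) * hstep n

end BirthDeath

section qPochhammer

variable {q : ℝ}

lemma multipliable_qPochInf (hq : |q| < 1) (a : ℝ) :
    Multipliable fun k : ℕ => 1 - a * q ^ k := by
  simpa only [sub_eq_add_neg] using
    Real.multipliable_one_add_of_summable ((summable_geometric_of_abs_lt_one hq).mul_left a).neg

lemma qPochInf_eq_one_sub_mul (hq : |q| < 1) (a : ℝ) :
    qPochInf q a = (1 - a) * qPochInf q (a * q) := by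
  have hshift : Multipliable fun k : ℕ => 1 - a * q ^ (k + 1) :=
    (multipliable_qPochInf hq (a * q)).congr fun k => by ring
  rw [qPochInf, tprod_eq_zero_mul' (f := fun k : ℕ => 1 - a * q ^ k) hshift, pow_zero, mul_one,
    qPochInf]
  exact congrArg _ (tprod_congr fun k => by ring)

lemma qPochInf_pos (hq0 : 0 ≤ q) (hq1 : q < 1) {a : ℝ} (ha : a < 1) : 0 < qPochInf q a := by
  have hq : |q| < 1 := by rwa [abs_of_nonneg hq0]
  have hfac : ∀ k : ℕ, 0 < 1 - a * q ^ k := fun k => by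
    have h1 := pow_le_one₀ hq0 hq1.le (n := k)
    have h0 := pow_nonneg hq0 k
    rcases le_total a 0 with ha0 | ha0 <;> nlinarith
  refine lt_of_le_of_ne (tprod_nonneg fun k => (hfac k).le) (Ne.symm ?_)
  have := tprod_one_add_ne_zero_of_summable (f := fun k : ℕ => -(a * q ^ k))
    (fun k => by simpa only [← sub_eq_add_neg] using (hfac k).ne')
    ((summable_geometric_of_abs_lt_one hq).mul_left a).neg.norm
  simpa only [qPochInf, sub_eq_add_neg] using this


lemma qPochInf_antitoneOn (hq0 : 0 ≤ q) (hq1 : q < 1) :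
    AntitoneOn (qPochInf q) (Set.Icc 0 1) := by
  have hq : |q| < 1 := by rwa [abs_of_nonneg hq0]
  rintro b ⟨hb0, -⟩ a ⟨-, ha1⟩ hba
  refine le_of_tendsto_of_tendsto' (multipliable_qPochInf hq a).hasProd.tendsto_prod_nat
    (multipliable_qPochInf hq b).hasProd.tendsto_prod_nat fun K => ?_
  have hqk : ∀ k : ℕ, 0 ≤ q ^ k ∧ q ^ k ≤ 1 := fun k =>
    ⟨pow_nonneg hq0 k, pow_le_one₀ hq0 hq1.le⟩
  refine Finset.prod_le_prod (fun k _ => ?_) (fun k _ => ?_) <;>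
    obtain ⟨h0, h1⟩ := hqk k <;> nlinarith

lemma qPochInf_strictAntiOn (hq0 : 0 ≤ q) (hq1 : q < 1) :
    StrictAntiOn (qPochInf q) (Set.Icc 0 1) := by
  have hq : |q| < 1 := by rwa [abs_of_nonneg hq0]
  rintro b ⟨hb0, hb1⟩ a ⟨ha0, ha1⟩ hba
  have hmem : ∀ c ∈ Set.Icc (0 : ℝ) 1, c * q ∈ Set.Icc (0 : ℝ) 1 := fun c ⟨hc0, hc1⟩ =>
    ⟨mul_nonneg hc0 hq0, mul_le_one₀ hc1 hq0 hq1.le⟩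
  have hpos : 0 < qPochInf q (b * q) :=
    qPochInf_pos hq0 hq1 (lt_of_le_of_lt (mul_le_of_le_one_left hq0 hb1) hq1)
  calc qPochInf q a = (1 - a) * qPochInf q (a * q) := qPochInf_eq_one_sub_mul hq a
    _ ≤ (1 - a) * qPochInf q (b * q) :=
      mul_le_mul_of_nonneg_left (qPochInf_antitoneOn hq0 hq1 (hmem b ⟨hb0, hb1⟩)
        (hmem a ⟨ha0, ha1⟩) (mul_le_mul_of_nonneg_right hba.le hq0)) (by linarith)
    _ < (1 - b) * qPochInf q (b * q) := by gcongr
    _ = qPochInf q b := (qPochInf_eq_one_sub_mul hq b).symm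


lemma qgamma_lt_one (hq0 : 0 < q) (hq1 : q < 1) {u v : ℝ} (hu : 0 ≤ u) (hv : 0 < v) :
    qgamma q u v < 1 := by
  have huv : q ^ (u + v) < q ^ u := Real.rpow_lt_rpow_of_exponent_gt hq0 hq1 (by linarith)
  have hu1 : q ^ u ≤ 1 := Real.rpow_le_one hq0.le hq1.le hu
  rw [qgamma, div_lt_one (qPochInf_pos hq0.le hq1 (huv.trans_le hu1))]
  exact qPochInf_strictAntiOn hq0.le hq1 ⟨(Real.rpow_pos_of_pos hq0 _).le, huv.le.trans hu1⟩
    ⟨(Real.rpow_pos_of_pos hq0 _).le, hu1⟩ huv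

lemma one_sub_mul_qgamma_add_one (hq0 : 0 < q) (hq1 : q < 1) {u v : ℝ} (huv : u + v ≠ 0) :
    (1 - q ^ u) * qgamma q (u + 1) v = (1 - q ^ (u + v)) * qgamma q u v := by
  have hq : |q| < 1 := by rwa [abs_of_pos hq0]
  have hne : 1 - q ^ (u + v) ≠ 0 := by
    rw [sub_ne_zero, ne_comm, ← Real.rpow_zero q, Ne, Real.rpow_right_inj hq0 hq1.ne]
    exact huv
  have hshift : ∀ w : ℝ, q ^ w * q = q ^ (w + 1) := fun w => (Real.rpow_add_one hq0.ne' w).symm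
  rw [qgamma, qgamma, qPochInf_eq_one_sub_mul hq (q ^ u),
    qPochInf_eq_one_sub_mul hq (q ^ (u + v)), hshift, hshift, add_right_comm u 1 v,
    mul_div_mul_comm]
  field_simp

lemma one_sub_qgamma_ne_zero (hq0 : 0 < q) (hq1 : q < 1) {u v : ℝ} (hu : 0 ≤ u) (hv : 0 < v) :
    1 - qgamma q u v ≠ 0 :=
  (sub_pos.2 (qgamma_lt_one hq0 hq1 hu hv)).ne'

end qPochhammer

section rates

variable {q α : ℝ}

lemma rQL_ne_zero (hq0 : 0 < q) (hq1 : q < 1) (hα : -1 < α) (n : ℕ) : rQL q α n ≠ 0 :=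
  div_ne_zero (one_sub_qgamma_ne_zero hq0 hq1 (by positivity) (by linarith))
    (one_sub_qgamma_ne_zero hq0 hq1 (by positivity) (by linarith))

lemma lamQL_mul_muQL (hq0 : 0 < q) (hq1 : q < 1) (hα : -1 < α) (n : ℕ) :
    lamQL q α n * muQL q α n =
      q ^ (-(4 * (n : ℝ)) - 2 * (α + 1) + 1) * (1 - q ^ (n : ℝ)) *
        (1 - q ^ ((n : ℝ) + (α + 1))) := by
  have hr := rQL_ne_zero hq0 hq1 hα n
  have hexp : q ^ (-(2 * (n : ℝ)) - α - 1) * q ^ (-(2 * (n : ℝ)) - α) =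
      q ^ (-(4 * (n : ℝ)) - 2 * (α + 1) + 1) := by
    rw [← Real.rpow_add hq0]; ring_nf
  rw [lamQL, muQL, ← hexp, add_assoc (n : ℝ) α 1]
  field_simp

lemma lamQL_add_muQL_succ (hq0 : 0 < q) (hq1 : q < 1) (hα : -1 < α) (n : ℕ) :
    lamQL q α n + muQL q α (n + 1) =
      q ^ (-(2 * (n : ℝ)) - (α + 1) - 1) *
        (1 - q ^ ((n : ℝ) + 1) + q * (1 - q ^ ((n : ℝ) + (α + 1)))) := by
  have hne : ∀ u : ℝ, 0 ≤ u → 1 - qgamma q u (α + 1) ≠ 0 := fun u hu =>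
    one_sub_qgamma_ne_zero hq0 hq1 hu (by linarith)
  have hrec : ∀ u : ℝ, 0 ≤ u → (1 - q ^ u) * qgamma q (u + 1) (α + 1) =
      (1 - q ^ (u + (α + 1))) * qgamma q u (α + 1) := fun u hu =>
    one_sub_mul_qgamma_add_one hq0 hq1 (by linarith)
  have hrec_n := hrec n (by positivity)
  have hrec_succ := hrec (n + 1) (by positivity)
  have hn0 := hne n (by positivity)
  have hn1 := hne (n + 1) (by positivity)
  have hn2 := hne (n + 1 + 1) (by positivity)
  have e1 : q ^ (-(2 * (n : ℝ)) - α - 1) = q ^ (-(2 * (n : ℝ)) - (α + 1) - 1) * q := by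
    rw [← Real.rpow_add_one hq0.ne']; ring_nf
  have e2 : q ^ (-(2 * ((n : ℝ) + 1)) - α) = q ^ (-(2 * (n : ℝ)) - (α + 1) - 1) := by ring_nf
  have e3 : q ^ ((n : ℝ) + 1) = q ^ (n : ℝ) * q := Real.rpow_add_one hq0.ne' _
  have e4 : q ^ ((n : ℝ) + 1 + (α + 1)) = q ^ ((n : ℝ) + (α + 1)) * q := by
    rw [← Real.rpow_add_one hq0.ne']; ring_nf
  rw [e3, e4] at hrec_succ
  rw [lamQL, muQL, rQL, rQL]
  push_cast
  rw [e1, e2, e3, add_assoc (n : ℝ) α 1]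
  field_simp
  linear_combination q * hrec_n - hrec_succ

end rates

/-- Theorem 6.9: the modified q-Laguerre monic polynomials
`p̃_n^{(α)} = p_n^{(α+1)} + μ̃_n^{(α)} p_{n−1}^{(α+1)}` satisfy the Birth–Death three-term
recurrence with parameters `λ̃_n^{(α)}`, `μ̃_n^{(α)}`. -/
theorem modified_qLaguerre_birth_death_recurrence
    (q α : ℝ) (hq0 : 0 < q) (hq1 : q < 1) (hα : -1 < α)
    (bcoef dcoef : ℝ → ℕ → ℝ)
    (hb : ∀ β : ℝ, ∀ n : ℕ, bcoef β n =
      q ^ (-(2 * (n : ℝ)) - β - 1) * (1 - q ^ ((n : ℝ) + 1) + q * (1 - q ^ ((n : ℝ) + β))))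
    (hd : ∀ β : ℝ, ∀ n : ℕ, dcoef β n =
      q ^ (-(4 * (n : ℝ)) - 2 * β + 1) * (1 - q ^ (n : ℝ)) * (1 - q ^ ((n : ℝ) + β)))
    (p : ℝ → ℕ → ℝ → ℝ)
    (hp0 : ∀ β x, p β 0 x = 1)
    (hp1 : ∀ β x, p β 1 x = x - bcoef β 0)
    (hprec : ∀ β : ℝ, ∀ n : ℕ, 1 ≤ n → ∀ x,
      p β (n + 1) x = (x - bcoef β n) * p β n x - dcoef β n * p β (n - 1) x)
    (ptilde : ℕ → ℝ → ℝ)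
    (hpt0 : ∀ x, ptilde 0 x = p (α + 1) 0 x)
    (hpt : ∀ n : ℕ, 1 ≤ n → ∀ x,
      ptilde n x = p (α + 1) n x + muQL q α n * p (α + 1) (n - 1) x) :
    (∀ x, ptilde 1 x = (x - lamQL q α 0) * ptilde 0 x) ∧
    (∀ n : ℕ, 1 ≤ n → ∀ x,
      ptilde (n + 1) x = (x - (lamQL q α n + muQL q α n)) * ptilde n x
        - lamQL q α (n - 1) * muQL q α n * ptilde (n - 1) x) := by
  have hsum : ∀ n, bcoef (α + 1) n = lamQL q α n + muQL q α (n + 1) := fun n => by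
    rw [hb, lamQL_add_muQL_succ hq0 hq1 hα]
  have hprod : ∀ n, dcoef (α + 1) n = lamQL q α n * muQL q α n := fun n => by
    rw [hd, lamQL_mul_muQL hq0 hq1 hα]
  have hpt' : ∀ x n,
      ptilde (n + 1) x = p (α + 1) (n + 1) x + muQL q α (n + 1) * p (α + 1) n x :=
    fun x n => hpt (n + 1) n.succ_pos x
  have hstep : ∀ x n, ptilde (n + 1) x = x * p (α + 1) n x - lamQL q α n * ptilde n x := by
    intro x
    refine BirthDeath.succ_eq_mul_sub_mul (p := (p (α + 1) · x)) (pt := (ptilde · x))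
      ?_ (fun n => ?_) (hpt0 x) (hpt' x)
    · rw [hp1, hp0, hsum]; ring
    · rw [hprec _ (n + 1) n.succ_pos, hsum, hprod]; rfl
  refine ⟨fun x => ?_, fun n hn x => ?_⟩
  · rw [hstep, hpt0]; ring
  · obtain ⟨n, rfl⟩ := Nat.exists_eq_add_of_le' hn
    exact BirthDeath.recurrence_of_factorization (p := (p (α + 1) · x)) (pt := (ptilde · x))
      (hpt' x) (hstep x) n
end
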